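/- For any bipartite graph G = (L, R, E) with n ≥ 2 vertices and any edge e = (u, v) ∉ E, the number of new maximal bicliques created by adding e satisfies |BC(G+e) \ BC(G)| ≤ g(n−2). -/
import Mathlib


/-- `(X, Y)` is a biclique of the bipartite graph with parts `L`, `R` and edge set `E`:
`X ⊆ L`, `Y ⊆ R`, and every vertex of `X` is joined to every vertex of `Y`. -/
def IsBiclique {V : Type*} (L R : Finset V) (E : Finset (V × V))
    (B : Finset V × Finset V) : Prop :=
  B.1 ⊆ L ∧ B.2 ⊆ R ∧ ∀ x ∈ B.1, ∀ y ∈ B.2, (x, y) ∈ E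

/-- `(X, Y)` is a maximal biclique: it is a biclique, and no other biclique contains it
componentwise. -/
def IsMaximalBiclique {V : Type*} (L R : Finset V) (E : Finset (V × V))
    (B : Finset V × Finset V) : Prop :=
  IsBiclique L R E B ∧
    ∀ B' : Finset V × Finset V, IsBiclique L R E B' → B.1 ⊆ B'.1 → B.2 ⊆ B'.2 → B' = B

/-- `BC L R E` is the set of maximal bicliques of the bipartite graph `(L, R, E)`. -/
def BC {V : Type*} (L R : Finset V) (E : Finset (V × V)) : Set (Finset V × Finset V) :=
  {B | IsMaximalBiclique L R E B}

/-- `g m` is the maximum number of maximal bicliques over all bipartite graphs with `m`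
vertices. -/
noncomputable def g (m : ℕ) : ℕ :=
  sSup {k : ℕ | ∃ (W : Type) (L R : Finset W) (E : Finset (W × W)),
    Disjoint L R ∧ E ⊆ L ×ˢ R ∧ L.card + R.card = m ∧ (BC L R E).ncard = k}

lemma bc_subset {V : Type*} [DecidableEq V] (L R : Finset V) (E : Finset (V × V)) :
    BC L R E ⊆ ↑(L.powerset ×ˢ R.powerset) := by
  rintro ⟨X, Y⟩ ⟨⟨h1, h2, _⟩, _⟩
  simp only [Finset.coe_product, Set.mem_prod, Finset.mem_coe, Finset.mem_powerset]
  exact ⟨h1, h2⟩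

lemma bc_finite {V : Type*} [DecidableEq V] (L R : Finset V) (E : Finset (V × V)) :
    (BC L R E).Finite :=
  (Finset.finite_toSet _).subset (bc_subset L R E)

lemma bc_ncard_le {V : Type*} [DecidableEq V] (L R : Finset V) (E : Finset (V × V)) :
    (BC L R E).ncard ≤ 2 ^ (L.card + R.card) := by
  calc (BC L R E).ncard ≤ (↑(L.powerset ×ˢ R.powerset) : Set _).ncard :=
        Set.ncard_le_ncard (bc_subset L R E) (Finset.finite_toSet _)
    _ = (L.powerset ×ˢ R.powerset).card := Set.ncard_coe_finset _
    _ = 2 ^ L.card * 2 ^ R.card := by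
        rw [Finset.card_product, Finset.card_powerset, Finset.card_powerset]
    _ = 2 ^ (L.card + R.card) := (pow_add 2 _ _).symm

lemma g_bdd (m : ℕ) : BddAbove {k : ℕ | ∃ (W : Type) (L R : Finset W) (E : Finset (W × W)),
    Disjoint L R ∧ E ⊆ L ×ˢ R ∧ L.card + R.card = m ∧ (BC L R E).ncard = k} := by
  refine ⟨2 ^ m, ?_⟩
  rintro k ⟨W, L, R, E, -, -, hcard, hk⟩
  classical
  rw [← hk, ← hcard]
  exact bc_ncard_le L R E

/-- For a bipartite graph `G` on `n ≥ 2` vertices and any edge `e = (u, v) ∉ E`, the number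
of new maximal bicliques created by adding `e` is at most `g(n-2)`. -/
theorem stmt8 {V : Type*} [DecidableEq V] (L R : Finset V) (E : Finset (V × V))
    (hdisj : Disjoint L R) (hE : E ⊆ L ×ˢ R) (hn : 2 ≤ L.card + R.card)
    (u v : V) (hu : u ∈ L) (hv : v ∈ R) (he : (u, v) ∉ E) :
    (BC L R (E ∪ {(u, v)}) \ BC L R E).ncard ≤ g (L.card + R.card - 2) := by
  classical
  set S : Finset V := L ∪ R with hS
  set f : V → ℕ := fun x => if h : x ∈ S then (S.equivFin ⟨x, h⟩ : ℕ) else 0 with hf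
  have hinj : ∀ a ∈ S, ∀ b ∈ S, f a = f b → a = b := by
    intro a ha b hb hab
    simp only [hf, dif_pos ha, dif_pos hb] at hab
    exact Subtype.ext_iff.mp (S.equivFin.injective (Fin.val_injective hab))
  have hmemL : ∀ x ∈ L, x ∈ S := fun x hx => Finset.mem_union_left _ hx
  have hmemR : ∀ y ∈ R, y ∈ S := fun y hy => Finset.mem_union_right _ hy
  set Nv : Finset V := L.filter (fun x => (x, v) ∈ E) with hNv
  set Nu : Finset V := R.filter (fun y => (u, y) ∈ E) with hNu
  have hNvL : Nv ⊆ L := Finset.filter_subset _ _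
  have hNuR : Nu ⊆ R := Finset.filter_subset _ _
  have hu_nv : u ∉ Nv := by
    rw [hNv, Finset.mem_filter]; exact fun h => he h.2
  have hv_nu : v ∉ Nu := by
    rw [hNu, Finset.mem_filter]; exact fun h => he h.2
  set LN : Finset ℕ := Nv.image f with hLN
  set RN : Finset ℕ := Nu.image f with hRN
  set EN : Finset (ℕ × ℕ) :=
    (E.filter (fun p => (p.1, v) ∈ E ∧ (u, p.2) ∈ E)).image (Prod.map f f) with hEN
  have hLNcard : LN.card = Nv.card :=
    Finset.card_image_of_injOn (fun a ha b hb => hinj a (hmemL a (hNvL ha)) b (hmemL b (hNvL hb)))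
  have hRNcard : RN.card = Nu.card :=
    Finset.card_image_of_injOn (fun a ha b hb => hinj a (hmemR a (hNuR ha)) b (hmemR b (hNuR hb)))
  have hNv_le : Nv.card + 1 ≤ L.card := by
    have hsub : Nv ⊆ L.erase u := by
      intro x hx
      rw [Finset.mem_erase]
      refine ⟨fun h => hu_nv (h ▸ hx), hNvL hx⟩
    have h1 := Finset.card_le_card hsub
    have h2 := Finset.card_erase_of_mem hu
    have h3 := Finset.card_pos.mpr ⟨u, hu⟩
    omega
  have hNu_le : Nu.card + 1 ≤ R.card := by
    have hsub : Nu ⊆ R.erase v := by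
      intro y hy
      rw [Finset.mem_erase]
      refine ⟨fun h => hv_nu (h ▸ hy), hNuR hy⟩
    have h1 := Finset.card_le_card hsub
    have h2 := Finset.card_erase_of_mem hv
    have h3 := Finset.card_pos.mpr ⟨v, hv⟩
    omega
  set k : ℕ := (L.card + R.card - 2) - (LN.card + RN.card) with hk
  set M : ℕ := (LN ∪ RN).sup id + 1 with hM
  set P : Finset ℕ := (Finset.range k).image (· + M) with hP
  have hPcard : P.card = k := by
    rw [hP, Finset.card_image_of_injective _ (add_left_injective M), Finset.card_range]
  have hPdisj : ∀ x ∈ P, x ∉ LN ∪ RN := by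
    intro x hx hx'
    rw [hP, Finset.mem_image] at hx
    obtain ⟨i, -, rfl⟩ := hx
    have h2 : i + M ≤ (LN ∪ RN).sup id := Finset.le_sup (f := id) hx'
    omega
  set L0 : Finset ℕ := LN ∪ P with hL0
  have hLN_RN : Disjoint LN RN := by
    rw [Finset.disjoint_left]
    intro t htL htR
    rw [hLN, Finset.mem_image] at htL
    rw [hRN, Finset.mem_image] at htR
    obtain ⟨a, ha, rfl⟩ := htL
    obtain ⟨b, hb, hab⟩ := htR
    have hba : b = a := hinj b (hmemR b (hNuR hb)) a (hmemL a (hNvL ha)) hab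
    exact (Finset.disjoint_left.mp hdisj (hNvL ha)) (hba ▸ hNuR hb)
  have hdisj0 : Disjoint L0 RN := by
    rw [hL0, Finset.disjoint_union_left]
    refine ⟨hLN_RN, Finset.disjoint_left.mpr fun x hx hx' => hPdisj x hx (Finset.mem_union_right _ hx')⟩
  have hLN_P : Disjoint LN P := by
    rw [Finset.disjoint_right]
    exact fun x hx hx' => hPdisj x hx (Finset.mem_union_left _ hx')
  have hEN_sub : EN ⊆ LN ×ˢ RN := by
    intro p hp
    rw [hEN, Finset.mem_image] at hp
    obtain ⟨q, hq, rfl⟩ := hp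
    rw [Finset.mem_filter] at hq
    have hqLR := hE hq.1
    rw [Finset.mem_product] at hqLR ⊢
    constructor
    · exact Finset.mem_image_of_mem f (Finset.mem_filter.mpr ⟨hqLR.1, hq.2.1⟩)
    · exact Finset.mem_image_of_mem f (Finset.mem_filter.mpr ⟨hqLR.2, hq.2.2⟩)
  have hE0_sub : EN ⊆ L0 ×ˢ RN := by
    refine hEN_sub.trans (Finset.product_subset_product (Finset.subset_union_left) subset_rfl)
  have hcard0 : L0.card + RN.card = L.card + R.card - 2 := by
    rw [hL0, Finset.card_union_of_disjoint hLN_P]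
    omega
  have hEN_pull : ∀ a ∈ L, ∀ b ∈ R, (f a, f b) ∈ EN → (a, b) ∈ E ∧ (a, v) ∈ E ∧ (u, b) ∈ E := by
    intro a ha b hb hab
    rw [hEN, Finset.mem_image] at hab
    obtain ⟨p, hp, hpe⟩ := hab
    rw [Finset.mem_filter] at hp
    have hpLR := hE hp.1
    rw [Finset.mem_product] at hpLR
    have h1 : p.1 = a :=
      hinj p.1 (hmemL _ hpLR.1) a (hmemL _ ha) (congrArg Prod.fst hpe)
    have h2 : p.2 = b :=
      hinj p.2 (hmemR _ hpLR.2) b (hmemR _ hb) (congrArg Prod.snd hpe)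
    rw [← h1, ← h2]
    exact ⟨hp.1, hp.2.1, hp.2.2⟩
  have himg_sub : ∀ A B : Finset V, A ⊆ S → B ⊆ S → A.image f = B.image f → A ⊆ B := by
    intro A B hA hB hEq x hx
    have hfx : f x ∈ B.image f := hEq ▸ Finset.mem_image_of_mem f hx
    obtain ⟨b, hb, hfb⟩ := Finset.mem_image.mp hfx
    exact (hinj b (hB hb) x (hA hx) hfb) ▸ hb
  have himg : ∀ A B : Finset V, A ⊆ S → B ⊆ S → A.image f = B.image f → A = B :=
    fun A B hA hB hEq =>
      Finset.Subset.antisymm (himg_sub A B hA hB hEq) (himg_sub B A hB hA hEq.symm)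
  -- new maximal bicliques contain u and v
  have hnew : ∀ B ∈ BC L R (E ∪ {(u, v)}) \ BC L R E, u ∈ B.1 ∧ v ∈ B.2 := by
    rintro ⟨X, Y⟩ ⟨hmax, hnot⟩
    obtain ⟨⟨hX, hY, hedge⟩, hmx⟩ := hmax
    by_contra hcon
    apply hnot
    have hbic : IsBiclique L R E (X, Y) := by
      refine ⟨hX, hY, fun x hx y hy => ?_⟩
      have hxy := hedge x hx y hy
      rw [Finset.mem_union, Finset.mem_singleton] at hxy
      rcases hxy with h | h
      · exact h
      · exfalso
        rw [Prod.mk.injEq] at h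
        exact hcon ⟨h.1 ▸ hx, h.2 ▸ hy⟩
    refine ⟨hbic, fun B' hB' h1 h2 => ?_⟩
    exact hmx B' ⟨hB'.1, hB'.2.1, fun x hx y hy => Finset.mem_union_left _ (hB'.2.2 x hx y hy)⟩ h1 h2
  have hXNv : ∀ X Y : Finset V, IsMaximalBiclique L R (E ∪ {(u, v)}) (X, Y) → v ∈ Y →
      ∀ x ∈ X, x ≠ u → x ∈ Nv := by
    intro X Y hXY hvY x hx hxu
    have hxy := hXY.1.2.2 x hx v hvY
    rw [Finset.mem_union, Finset.mem_singleton] at hxy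
    rcases hxy with h | h
    · exact Finset.mem_filter.mpr ⟨hXY.1.1 hx, h⟩
    · exact absurd (congrArg Prod.fst h) hxu
  have hYNu : ∀ X Y : Finset V, IsMaximalBiclique L R (E ∪ {(u, v)}) (X, Y) → u ∈ X →
      ∀ y ∈ Y, y ≠ v → y ∈ Nu := by
    intro X Y hXY huX y hy hyv
    have hxy := hXY.1.2.2 u huX y hy
    rw [Finset.mem_union, Finset.mem_singleton] at hxy
    rcases hxy with h | h
    · exact Finset.mem_filter.mpr ⟨hXY.1.2.1 hy, h⟩
    · exact absurd (congrArg Prod.snd h) hyv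
  -- characterization in the Y = {v} case
  have hchar : ∀ X Y : Finset V, (X, Y) ∈ BC L R (E ∪ {(u, v)}) \ BC L R E →
      Y.erase v = ∅ → X = insert u Nv ∧ Y = {v} := by
    intro X Y hB hc
    obtain ⟨huX, hvY⟩ := hnew _ hB
    obtain ⟨⟨⟨hX, hY, hedge⟩, hmx⟩, -⟩ := hB
    have hYv : Y = {v} := by
      rcases (Finset.erase_eq_empty_iff Y v).mp hc with h | h
      · exact absurd (h ▸ hvY) (Finset.notMem_empty v)
      · exact h
    have hbic : IsBiclique L R (E ∪ {(u, v)}) (insert u Nv, {v}) := by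
      refine ⟨Finset.insert_subset hu hNvL, Finset.singleton_subset_iff.mpr hv, ?_⟩
      intro x hx y hy
      rw [Finset.mem_singleton] at hy
      subst hy
      rcases Finset.mem_insert.mp hx with rfl | hx'
      · exact Finset.mem_union_right _ (Finset.mem_singleton_self _)
      · exact Finset.mem_union_left _ (Finset.mem_filter.mp hx').2
    have hXsub : X ⊆ insert u Nv := by
      intro x hx
      by_cases hxu : x = u
      · exact hxu ▸ Finset.mem_insert_self u Nv
      · exact Finset.mem_insert_of_mem (hXNv X Y ⟨⟨hX, hY, hedge⟩, hmx⟩ hvY x hx hxu)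
    have hYsub : Y ⊆ {v} := hYv ▸ subset_rfl
    have := hmx (insert u Nv, {v}) hbic hXsub hYsub
    rw [Prod.mk.injEq] at this
    exact ⟨this.1.symm, hYv⟩
  -- the injection
  have hmain : (BC L R (E ∪ {(u, v)}) \ BC L R E).ncard ≤ (BC L0 RN EN).ncard := by
    refine Set.ncard_le_ncard_of_injOn
      (fun B => ((B.1.erase u).image f ∪ (if B.2.erase v = ∅ then P else ∅),
        (B.2.erase v).image f)) ?_ ?_ (bc_finite L0 RN EN)
    · -- maps into BC L0 RN EN
      rintro ⟨X, Y⟩ hB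
      obtain ⟨huX, hvY⟩ := hnew _ hB
      have hBmem := hB
      obtain ⟨⟨⟨hX, hY, hedge⟩, hmx⟩, -⟩ := hB
      have hXsub : X.erase u ⊆ Nv := by
        intro x hx
        rw [Finset.mem_erase] at hx
        exact hXNv X Y ⟨⟨hX, hY, hedge⟩, hmx⟩ hvY x hx.2 hx.1
      have hYsub : Y.erase v ⊆ Nu := by
        intro y hy
        rw [Finset.mem_erase] at hy
        exact hYNu X Y ⟨⟨hX, hY, hedge⟩, hmx⟩ huX y hy.2 hy.1
      have hA_LN : (X.erase u).image f ⊆ LN := by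
        rw [hLN]; exact Finset.image_subset_image hXsub
      have hB_RN : (Y.erase v).image f ⊆ RN := by
        rw [hRN]; exact Finset.image_subset_image hYsub
      show IsMaximalBiclique L0 RN EN
        ((X.erase u).image f ∪ (if Y.erase v = ∅ then P else ∅), (Y.erase v).image f)
      constructor
      · -- biclique
        refine ⟨?_, ?_, ?_⟩
        · refine Finset.union_subset (hA_LN.trans Finset.subset_union_left) ?_
          split
          · exact Finset.subset_union_right
          · exact Finset.empty_subset _
        · exact hB_RN
        · intro a ha b hb
          obtain ⟨yb, hyb, rfl⟩ := Finset.mem_image.mp hb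
          have hne : Y.erase v ≠ ∅ := Finset.ne_empty_of_mem hyb
          rw [if_neg hne, Finset.union_empty] at ha
          obtain ⟨xa, hxa, rfl⟩ := Finset.mem_image.mp ha
          have hxaX := Finset.mem_erase.mp hxa
          have hybY := Finset.mem_erase.mp hyb
          have hxyE : (xa, yb) ∈ E := by
            have hxy := hedge xa hxaX.2 yb hybY.2
            rw [Finset.mem_union, Finset.mem_singleton] at hxy
            rcases hxy with h | h
            · exact h
            · exact absurd (congrArg Prod.fst h) hxaX.1
          rw [hEN, Finset.mem_image]
          refine ⟨(xa, yb), Finset.mem_filter.mpr ⟨hxyE, ?_, ?_⟩, rfl⟩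
          · exact (Finset.mem_filter.mp (hXsub hxa)).2
          · exact (Finset.mem_filter.mp (hYsub hyb)).2
      · -- maximality
        rintro ⟨X', Y'⟩ ⟨hX'sub, hY'sub, hedge'⟩ hs1 hs2
        by_cases hc : Y.erase v = ∅
        · obtain ⟨hXeq, hYeq⟩ := hchar X Y hBmem hc
          have hAeq : (X.erase u).image f = LN := by
            rw [hXeq, Finset.erase_insert hu_nv, hLN]
          rw [if_pos hc, hAeq] at hs1 ⊢
          rw [hc, Finset.image_empty] at hs2 ⊢
          have hX'eq : X' = LN ∪ P := Finset.Subset.antisymm hX'sub hs1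
          have hY'eq : Y' = ∅ := by
            by_contra hY'ne
            obtain ⟨t, ht⟩ := Finset.nonempty_iff_ne_empty.mpr hY'ne
            have htRN : t ∈ RN := hY'sub ht
            obtain ⟨yb, hyb, rfl⟩ := Finset.mem_image.mp htRN
            have hstep : ∀ x ∈ Nv, (x, yb) ∈ E := by
              intro x hx
              have hfx : f x ∈ X' := hX'eq ▸ Finset.mem_union_left _ (Finset.mem_image_of_mem f hx)
              exact (hEN_pull x (hNvL hx) yb (hNuR hyb) (hedge' (f x) hfx (f yb) ht)).1
            have hbic2 : IsBiclique L R (E ∪ {(u, v)}) (insert u Nv, insert yb {v}) := by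
              refine ⟨Finset.insert_subset hu hNvL,
                Finset.insert_subset (hNuR hyb) (Finset.singleton_subset_iff.mpr hv), ?_⟩
              intro x hx y hy
              rcases Finset.mem_insert.mp hx with rfl | hx' <;>
                rcases Finset.mem_insert.mp hy with rfl | hy'
              · exact Finset.mem_union_left _ (Finset.mem_filter.mp hyb).2
              · rw [Finset.mem_singleton] at hy'
                subst hy'
                exact Finset.mem_union_right _ (Finset.mem_singleton_self _)
              · exact Finset.mem_union_left _ (hstep x hx')
              · rw [Finset.mem_singleton] at hy'
                subst hy'
                exact Finset.mem_union_left _ (Finset.mem_filter.mp hx').2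
            have hsx : X ⊆ insert u Nv := hXeq ▸ Finset.Subset.refl _
            have hsy : Y ⊆ insert yb {v} := by
              rw [hYeq]
              exact Finset.singleton_subset_iff.mpr
                (Finset.mem_insert_of_mem (Finset.mem_singleton_self v))
            have hcontr := hmx (insert u Nv, insert yb {v}) hbic2 hsx hsy
            rw [Prod.mk.injEq, hYeq] at hcontr
            have : yb ∈ ({v} : Finset V) := hcontr.2 ▸ Finset.mem_insert_self yb {v}
            rw [Finset.mem_singleton] at this
            exact hv_nu (this ▸ hyb)
          rw [Prod.mk.injEq]
          exact ⟨hX'eq, hY'eq⟩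
        · have hne : (Y.erase v).Nonempty := Finset.nonempty_iff_ne_empty.mpr hc
          rw [if_neg hc, Finset.union_empty] at hs1 ⊢
          obtain ⟨y0, hy0⟩ := hne
          have ht0 : f y0 ∈ Y' := hs2 (Finset.mem_image_of_mem f hy0)
          have hX'LN : X' ⊆ LN := by
            intro x' hx'
            have hx'E := hedge' x' hx' (f y0) ht0
            have := hEN_sub hx'E
            rw [Finset.mem_product] at this
            exact this.1
          -- pull back
          have hbic2 : IsBiclique L R (E ∪ {(u, v)})
              (insert u (Nv.filter (fun x => f x ∈ X')), insert v (Nu.filter (fun y => f y ∈ Y'))) := by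
            refine ⟨Finset.insert_subset hu ((Finset.filter_subset _ _).trans hNvL),
              Finset.insert_subset hv ((Finset.filter_subset _ _).trans hNuR), ?_⟩
            intro x hx y hy
            rcases Finset.mem_insert.mp hx with rfl | hx' <;>
              rcases Finset.mem_insert.mp hy with rfl | hy'
            · exact Finset.mem_union_right _ (Finset.mem_singleton_self _)
            · obtain ⟨hyNu, -⟩ := Finset.mem_filter.mp hy'
              exact Finset.mem_union_left _ (Finset.mem_filter.mp hyNu).2
            · obtain ⟨hxNv, -⟩ := Finset.mem_filter.mp hx'
              exact Finset.mem_union_left _ (Finset.mem_filter.mp hxNv).2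
            · obtain ⟨hxNv, hxX'⟩ := Finset.mem_filter.mp hx'
              obtain ⟨hyNu, hyY'⟩ := Finset.mem_filter.mp hy'
              exact Finset.mem_union_left _
                (hEN_pull x (hNvL hxNv) y (hNuR hyNu) (hedge' (f x) hxX' (f y) hyY')).1
          have hXc : X ⊆ insert u (Nv.filter (fun x => f x ∈ X')) := by
            intro x hx
            by_cases hxu : x = u
            · exact hxu ▸ Finset.mem_insert_self _ _
            · have hxNv : x ∈ Nv := hXNv X Y ⟨⟨hX, hY, hedge⟩, hmx⟩ hvY x hx hxu
              have hfx : f x ∈ X' := hs1 (Finset.mem_image_of_mem f (Finset.mem_erase.mpr ⟨hxu, hx⟩))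
              exact Finset.mem_insert_of_mem (Finset.mem_filter.mpr ⟨hxNv, hfx⟩)
          have hYc : Y ⊆ insert v (Nu.filter (fun y => f y ∈ Y')) := by
            intro y hy
            by_cases hyv : y = v
            · exact hyv ▸ Finset.mem_insert_self _ _
            · have hyNu : y ∈ Nu := hYNu X Y ⟨⟨hX, hY, hedge⟩, hmx⟩ huX y hy hyv
              have hfy : f y ∈ Y' := hs2 (Finset.mem_image_of_mem f (Finset.mem_erase.mpr ⟨hyv, hy⟩))
              exact Finset.mem_insert_of_mem (Finset.mem_filter.mpr ⟨hyNu, hfy⟩)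
          have hcontr := hmx _ hbic2 hXc hYc
          rw [Prod.mk.injEq] at hcontr
          obtain ⟨hX2, hY2⟩ := hcontr
          rw [Prod.mk.injEq]
          constructor
          · refine Finset.Subset.antisymm ?_ hs1
            intro x' hx'
            obtain ⟨xa, hxaNv, rfl⟩ := Finset.mem_image.mp (hX'LN hx')
            have hxaX : xa ∈ X := hX2 ▸ Finset.mem_insert_of_mem (Finset.mem_filter.mpr ⟨hxaNv, hx'⟩)
            have hxau : xa ≠ u := fun h => hu_nv (h ▸ hxaNv)
            exact Finset.mem_image_of_mem f (Finset.mem_erase.mpr ⟨hxau, hxaX⟩)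
          · refine Finset.Subset.antisymm ?_ hs2
            intro y' hy'
            obtain ⟨yb, hybNu, rfl⟩ := Finset.mem_image.mp (hY'sub hy')
            have hybY : yb ∈ Y := hY2 ▸ Finset.mem_insert_of_mem (Finset.mem_filter.mpr ⟨hybNu, hy'⟩)
            have hybv : yb ≠ v := fun h => hv_nu (h ▸ hybNu)
            exact Finset.mem_image_of_mem f (Finset.mem_erase.mpr ⟨hybv, hybY⟩)
    · -- injective
      rintro ⟨X1, Y1⟩ h1 ⟨X2, Y2⟩ h2 heq
      simp only [Prod.mk.injEq] at heq
      obtain ⟨heq1, heq2⟩ := heq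
      by_cases hc1 : Y1.erase v = ∅
      · have hc2 : Y2.erase v = ∅ := by
          rw [hc1, Finset.image_empty] at heq2
          exact Finset.image_eq_empty.mp heq2.symm
        obtain ⟨hX1e, hY1e⟩ := hchar X1 Y1 h1 hc1
        obtain ⟨hX2e, hY2e⟩ := hchar X2 Y2 h2 hc2
        rw [Prod.mk.injEq]
        exact ⟨hX1e.trans hX2e.symm, hY1e.trans hY2e.symm⟩
      · have hc2 : Y2.erase v ≠ ∅ := by
          intro hc2
          rw [hc2, Finset.image_empty] at heq2
          exact hc1 (Finset.image_eq_empty.mp heq2)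
        rw [if_neg hc1, if_neg hc2, Finset.union_empty, Finset.union_empty] at heq1
        have hX1L : X1 ⊆ L := h1.1.1.1
        have hX2L : X2 ⊆ L := h2.1.1.1
        have hY1R : Y1 ⊆ R := h1.1.1.2.1
        have hY2R : Y2 ⊆ R := h2.1.1.2.1
        have hXe : X1.erase u = X2.erase u :=
          himg _ _ ((Finset.erase_subset _ _).trans (hX1L.trans Finset.subset_union_left))
            ((Finset.erase_subset _ _).trans (hX2L.trans Finset.subset_union_left)) heq1
        have hYe : Y1.erase v = Y2.erase v :=
          himg _ _ ((Finset.erase_subset _ _).trans (hY1R.trans Finset.subset_union_right))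
            ((Finset.erase_subset _ _).trans (hY2R.trans Finset.subset_union_right)) heq2
        obtain ⟨hu1, hv1⟩ := hnew _ h1
        obtain ⟨hu2, hv2⟩ := hnew _ h2
        dsimp only at hu1 hv1 hu2 hv2
        rw [Prod.mk.injEq]
        constructor
        · rw [← Finset.insert_erase hu1, ← Finset.insert_erase hu2, hXe]
        · rw [← Finset.insert_erase hv1, ← Finset.insert_erase hv2, hYe]
  refine hmain.trans ?_
  apply le_csSup (g_bdd _)
  exact ⟨ℕ, L0, RN, EN, hdisj0, hE0_sub, hcard0, rfl⟩
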